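/- arXiv:1507.03364 — 2 statements merged into one kernel-verified Lean document; each statement's English description precedes it below -/
import Mathlib

section
/- For closed subspaces X, Y of a Hilbert space, ‖Π_X Π_Y‖ = sup{ Re⟨x, y⟩ : x ∈ X, y ∈ Y, ‖x‖ ≤ 1, ‖y‖ ≤ 1 }. -/
open ContinuousLinearMap Filter Topology

noncomputable section

/-- Orthogonal projection onto a subspace, as an endomorphism. -/
noncomputable def proj {E : Type*} [NormedAddCommGroup E] [InnerProductSpace ℝ E]
    (K : Submodule ℝ E) [Submodule.HasOrthogonalProjection K] : E →L[ℝ] E :=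
  K.subtypeL.comp (K.orthogonalProjectionOnto : E →L[ℝ] K)

/-- The discretized operator `A_{n,m} = Q_m A P_n`. -/
noncomputable def Amn {X Y : Type*} [NormedAddCommGroup X] [InnerProductSpace ℝ X]
    [NormedAddCommGroup Y] [InnerProductSpace ℝ Y]
    (A : X →L[ℝ] Y) (Xn : Submodule ℝ X) (Ym : Submodule ℝ Y)
    [Submodule.HasOrthogonalProjection Xn] [Submodule.HasOrthogonalProjection Ym] : X →L[ℝ] Y :=
  (proj Ym).comp (A.comp (proj Xn))

/-- `B` is the Moore–Penrose pseudoinverse of `A` (the four Penrose conditions). -/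
def IsPseudoinverse {X Y : Type*} [NormedAddCommGroup X] [InnerProductSpace ℝ X]
    [CompleteSpace X] [NormedAddCommGroup Y] [InnerProductSpace ℝ Y] [CompleteSpace Y]
    (A : X →L[ℝ] Y) (B : Y →L[ℝ] X) : Prop :=
  A.comp (B.comp A) = A ∧ B.comp (A.comp B) = B ∧
  ContinuousLinearMap.adjoint (A.comp B) = A.comp B ∧
  ContinuousLinearMap.adjoint (B.comp A) = B.comp A

lemma proj_eq_coe {E : Type*} [NormedAddCommGroup E] [InnerProductSpace ℝ E]
    (K : Submodule ℝ E) [Submodule.HasOrthogonalProjection K] (z : E) :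
    proj K z = (K.orthogonalProjectionOnto z : E) := rfl

lemma proj_mem {E : Type*} [NormedAddCommGroup E] [InnerProductSpace ℝ E]
    (K : Submodule ℝ E) [Submodule.HasOrthogonalProjection K] (z : E) : proj K z ∈ K :=
  (K.orthogonalProjectionOnto z).2

lemma inner_proj_eq {E : Type*} [NormedAddCommGroup E] [InnerProductSpace ℝ E]
    (K : Submodule ℝ E) [Submodule.HasOrthogonalProjection K] {x : E} (hx : x ∈ K) (z : E) :
    (inner ℝ x (proj K z) : ℝ) = inner ℝ x z := by
  have h := Submodule.sub_starProjection_mem_orthogonal (K := K) z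
  rw [Submodule.mem_orthogonal] at h
  have h0 : (inner ℝ x (z - proj K z) : ℝ) = 0 := h x hx
  rw [inner_sub_right] at h0
  linarith

lemma norm_proj_le {E : Type*} [NormedAddCommGroup E] [InnerProductSpace ℝ E]
    (K : Submodule ℝ E) [Submodule.HasOrthogonalProjection K] (z : E) : ‖proj K z‖ ≤ ‖z‖ := by
  rw [proj_eq_coe]
  calc ‖(K.orthogonalProjectionOnto z : E)‖ = ‖K.orthogonalProjectionOnto z‖ := rfl
    _ ≤ ‖(K.orthogonalProjectionOnto : E →L[ℝ] K)‖ * ‖z‖ := le_opNorm _ _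
    _ ≤ 1 * ‖z‖ := by
        have h := Submodule.orthogonalProjectionOnto_norm_le K
        nlinarith [norm_nonneg z]
    _ = ‖z‖ := one_mul _

/-- `‖Π_X Π_Y‖ = sup { ⟪x, y⟫ : x ∈ X, y ∈ Y, ‖x‖ ≤ 1, ‖y‖ ≤ 1 }`
(over a real Hilbert space, so `Re⟪x,y⟫ = ⟪x,y⟫`). -/
theorem stmt_8 {H : Type*} [NormedAddCommGroup H] [InnerProductSpace ℝ H] [CompleteSpace H]
    (Xs Ys : Submodule ℝ H)
    (hXc : IsClosed ((Xs : Set H))) (hYc : IsClosed ((Ys : Set H)))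
    [Submodule.HasOrthogonalProjection Xs] [Submodule.HasOrthogonalProjection Ys] :
    ‖(proj Xs).comp (proj Ys)‖ =
      sSup {r : ℝ | ∃ x ∈ Xs, ∃ y ∈ Ys, ‖x‖ ≤ 1 ∧ ‖y‖ ≤ 1 ∧ r = @inner ℝ H _ x y} := by
  set T := (proj Xs).comp (proj Ys) with hT
  set S := {r : ℝ | ∃ x ∈ Xs, ∃ y ∈ Ys, ‖x‖ ≤ 1 ∧ ‖y‖ ≤ 1 ∧ r = @inner ℝ H _ x y} with hS
  have hne : S.Nonempty := ⟨0, 0, Xs.zero_mem, 0, Ys.zero_mem, by simp, by simp, by simp⟩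
  -- every element of S is ≤ ‖T‖
  have hub : ∀ r ∈ S, r ≤ ‖T‖ := by
    rintro r ⟨x, hx, y, hy, hnx, hny, rfl⟩
    have h1 : (inner ℝ x y : ℝ) = inner ℝ x (T y) := by
      have hPy : proj Ys y = y := by
        exact Submodule.starProjection_eq_self_iff.2 hy
      have : T y = proj Xs y := by simp [hT, ContinuousLinearMap.comp_apply, hPy]
      rw [this, inner_proj_eq Xs hx]
    have h2 : (inner ℝ x (T y) : ℝ) ≤ ‖x‖ * ‖T y‖ := real_inner_le_norm _ _
    have h3 : ‖T y‖ ≤ ‖T‖ * ‖y‖ := T.le_opNorm y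
    have h4 : (0:ℝ) ≤ ‖T‖ := norm_nonneg _
    have h5 : (0:ℝ) ≤ ‖T y‖ := norm_nonneg _
    have h6 : (0:ℝ) ≤ ‖x‖ := norm_nonneg _
    nlinarith [h1]
  have hbdd : BddAbove S := ⟨‖T‖, hub⟩
  have hS0 : 0 ≤ sSup S := by
    refine le_csSup hbdd ?_
    exact ⟨0, Xs.zero_mem, 0, Ys.zero_mem, by simp, by simp, by simp⟩
  refine le_antisymm ?_ (Real.sSup_le hub (norm_nonneg _))
  -- ‖T‖ ≤ sSup S
  refine opNorm_le_bound _ hS0 fun z => ?_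
  rcases eq_or_ne z 0 with rfl | hz
  · simp
  have hz' : 0 < ‖z‖ := norm_pos_iff.2 hz
  -- reduce to unit vector u = z / ‖z‖
  set u := ‖z‖⁻¹ • z with hu
  have hnu : ‖u‖ = 1 := by
    rw [hu, norm_smul, norm_inv, norm_norm, inv_mul_cancel₀ hz'.ne']
  have hTz : ‖T z‖ = ‖T u‖ * ‖z‖ := by
    have : T z = ‖z‖ • T u := by
      rw [hu, map_smul, smul_smul, mul_inv_cancel₀ hz'.ne', one_smul]
    rw [this, norm_smul, norm_norm, mul_comm]
  rw [hTz]
  gcongr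
  -- now show ‖T u‖ ≤ sSup S
  rcases eq_or_ne (T u) 0 with hTu | hTu
  · rw [hTu, norm_zero]; exact hS0
  have hTu' : 0 < ‖T u‖ := norm_pos_iff.2 hTu
  set y := proj Ys u with hy
  set x := ‖T u‖⁻¹ • T u with hx
  have hTuy : T u = proj Xs y := rfl
  have hxmem : x ∈ Xs := Xs.smul_mem _ (by rw [hTuy]; exact proj_mem _ _)
  have hymem : y ∈ Ys := proj_mem _ _
  have hnx : ‖x‖ ≤ 1 := by
    rw [hx, norm_smul, norm_inv, norm_norm, inv_mul_cancel₀ hTu'.ne']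
  have hny : ‖y‖ ≤ 1 := by rw [hy]; calc ‖proj Ys u‖ ≤ ‖u‖ := norm_proj_le _ _
                                    _ = 1 := hnu
  have hinner : (inner ℝ x y : ℝ) = ‖T u‖ := by
    have h2 : (inner ℝ (T u) y : ℝ) = ‖T u‖ ^ 2 := by
      have h3 := inner_proj_eq Xs (proj_mem Xs y) y
      rw [← hTuy] at h3
      rw [← h3, real_inner_self_eq_norm_sq]
    rw [hx, real_inner_smul_left, h2]
    field_simp
  calc ‖T u‖ = inner ℝ x y := hinner.symm
    _ ≤ sSup S := le_csSup hbdd ⟨x, hxmem, y, hymem, hnx, hny, rfl⟩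
end
end

section
/- There exists C with sup_{n,m} ‖A_{n,m}† A‖ ≤ C (global convergence) if and only if there is a constant C' such that for every x ∈ X there exists u_n ∈ X_n with ‖x − u_n‖ + ‖A_{n,m}† A (x − u_n)‖ ≤ C' ‖x‖ (a Natterer-type condition). -/
open ContinuousLinearMap Filter Topology

noncomputable section

lemma sa_idem_norm {E : Type*} [NormedAddCommGroup E] [InnerProductSpace ℝ E] [CompleteSpace E]
    (P : E →L[ℝ] E) (hsa : ContinuousLinearMap.adjoint P = P) (hid : P.comp P = P) (x : E) :
    ‖P x‖ ≤ ‖x‖ := by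
  have h2 : P (P x) = P x := by
    have := congrArg (fun T => T x) hid; simpa using this
  have hadj := ContinuousLinearMap.adjoint_inner_right P (P x) x
  rw [hsa, h2] at hadj
  have h1 : ‖P x‖ ^ 2 = (inner ℝ (P x) x : ℝ) := by
    rw [← hadj, real_inner_self_eq_norm_sq]
  have h3 : (inner ℝ (P x) x : ℝ) ≤ ‖P x‖ * ‖x‖ := real_inner_le_norm _ _
  nlinarith [norm_nonneg (P x), norm_nonneg x]

/-- Pointwise key bound: for `u ∈ Xn`, `‖B (A u)‖ ≤ ‖u‖`. -/
lemma key_bound {X Y : Type*} [NormedAddCommGroup X] [InnerProductSpace ℝ X] [CompleteSpace X]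
    [NormedAddCommGroup Y] [InnerProductSpace ℝ Y] [CompleteSpace Y]
    (A : X →L[ℝ] Y) (Xn : Submodule ℝ X) (Ym : Submodule ℝ Y)
    [Submodule.HasOrthogonalProjection Xn] [Submodule.HasOrthogonalProjection Ym]
    (B : Y →L[ℝ] X) (hB : IsPseudoinverse (Amn A Xn Ym) B)
    {u : X} (hu : u ∈ Xn) : ‖B (A u)‖ ≤ ‖u‖ := by
  obtain ⟨h1, h2, h3, h4⟩ := hB
  set Am := Amn A Xn Ym with hAm
  -- pointwise versions
  have h1p : ∀ x, Am (B (Am x)) = Am x := fun x => by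
    have := congrArg (fun T => T x) h1; simpa using this
  have h2p : ∀ y, B (Am (B y)) = B y := fun y => by
    have := congrArg (fun T => T y) h2; simpa using this
  -- (a) B vanishes on Ymᗮ
  have ha : ∀ z ∈ Ymᗮ, B z = 0 := by
    intro z hz
    set Q' : Y →L[ℝ] Y := Am.comp B with hQ'
    have hQmem : ∀ y, Q' y ∈ Ym := by
      intro y
      simp only [hQ', comp_apply, hAm, Amn, _root_.proj]
      exact SetLike.coe_mem _
    have hQid : ∀ y, Q' (Q' y) = Q' y := by
      intro y
      simp only [hQ', comp_apply]
      rw [h1p]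
    have hQz : Q' z = 0 := by
      have hadj := ContinuousLinearMap.adjoint_inner_right Q' (Q' z) z
      rw [h3] at hadj
      have hzero : (inner ℝ (Q' z) z : ℝ) = 0 := by
        exact (Submodule.mem_orthogonal Ym z).mp hz (Q' z) (hQmem z)
      have : (inner ℝ (Q' z) (Q' z) : ℝ) = 0 := by
        rw [hadj, hQid, hzero]
      exact inner_self_eq_zero.mp this
    have : B z = B (Q' z) := (h2p z).symm
    rw [this, hQz, map_zero]
  -- (b) B (A u) = B (Am u)
  have hproj : _root_.proj Xn u = u := by
    simp only [_root_.proj, comp_apply, Submodule.subtypeL_apply]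
    exact Submodule.starProjection_eq_self_iff.mpr hu
  have hAmu : Am u = _root_.proj Ym (A u) := by
    simp only [hAm, Amn, comp_apply, hproj]
  have hb : B (A u) = B (Am u) := by
    have hmem : A u - _root_.proj Ym (A u) ∈ Ymᗮ := by
      exact Submodule.sub_starProjection_mem_orthogonal (K := Ym) (A u)
    have h0 := ha _ hmem
    rw [map_sub] at h0
    rw [hAmu]
    exact sub_eq_zero.mp h0
  -- (c) norm bound for the projection B ∘ Am
  have hid : (B.comp Am).comp (B.comp Am) = B.comp Am := by
    ext y
    simp only [comp_apply]
    rw [h2p]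
  have := sa_idem_norm (B.comp Am) h4 hid u
  simpa [hb] using this

/-- uniform boundedness `sup_{n,m} ‖A_{n,m}† A‖ ≤ C` holds iff there is `C'`
such that for every `x` (and every `n, m`) there exists `u ∈ X_n` with
`‖x − u‖ + ‖A_{n,m}† A (x − u)‖ ≤ C' ‖x‖` (Natterer-type condition). -/
theorem stmt_15 {X Y : Type*} [NormedAddCommGroup X] [InnerProductSpace ℝ X] [CompleteSpace X]
    [NormedAddCommGroup Y] [InnerProductSpace ℝ Y] [CompleteSpace Y]
    (A : X →L[ℝ] Y) (Xn : ℕ → Submodule ℝ X) (Ym : ℕ → Submodule ℝ Y)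
    [∀ n, FiniteDimensional ℝ (Xn n)] [∀ m, FiniteDimensional ℝ (Ym m)]
    (hX : Monotone Xn) (hY : Monotone Ym)
    (hdX : Dense (↑(⨆ n, Xn n) : Set X)) (hdY : Dense (↑(⨆ m, Ym m) : Set Y))
    (Adag : ℕ → ℕ → (Y →L[ℝ] X))
    (hdag : ∀ n m, IsPseudoinverse (Amn A (Xn n) (Ym m)) (Adag n m)) :
    (∃ C : ℝ, ∀ n m : ℕ, ‖(Adag n m).comp A‖ ≤ C) ↔
    (∃ C' : ℝ, ∀ (x : X) (n m : ℕ), ∃ u ∈ Xn n,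
      ‖x - u‖ + ‖Adag n m (A (x - u))‖ ≤ C' * ‖x‖) := by
  constructor
  · rintro ⟨C, hC⟩
    refine ⟨C + 1, fun x n m => ⟨0, Submodule.zero_mem _, ?_⟩⟩
    have h1 : ‖Adag n m (A (x - 0))‖ ≤ C * ‖x‖ := by
      have := ((Adag n m).comp A).le_opNorm x
      have h2 : ‖(Adag n m).comp A‖ * ‖x‖ ≤ C * ‖x‖ :=
        mul_le_mul_of_nonneg_right (hC n m) (norm_nonneg x)
      simpa [comp_apply] using le_trans (by simpa [comp_apply] using this) h2
    have : ‖x - (0 : X)‖ = ‖x‖ := by simp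
    rw [this]
    linarith
  · rintro ⟨C', hC'⟩
    refine ⟨max (1 + 2 * C') 0, fun n m => ?_⟩
    apply opNorm_le_bound _ (le_max_right _ _)
    intro x
    obtain ⟨u, hu, hb⟩ := hC' x n m
    have hxu : ‖x - u‖ ≤ C' * ‖x‖ := le_trans (le_add_of_nonneg_right (norm_nonneg _)) hb
    have hBAxu : ‖Adag n m (A (x - u))‖ ≤ C' * ‖x‖ :=
      le_trans (le_add_of_nonneg_left (norm_nonneg _)) hb
    have hBAu : ‖Adag n m (A u)‖ ≤ ‖u‖ :=
      key_bound A (Xn n) (Ym m) (Adag n m) (hdag n m) hu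
    have hu_le : ‖u‖ ≤ ‖x‖ + C' * ‖x‖ := by
      have hxx : x - (x - u) = u := by abel
      have : ‖u‖ ≤ ‖x‖ + ‖x - u‖ := by
        calc ‖u‖ = ‖x - (x - u)‖ := by rw [hxx]
          _ ≤ ‖x‖ + ‖x - u‖ := norm_sub_le _ _
      linarith
    have hsum : A u + A (x - u) = A x := by
      rw [← map_add]; congr 1; abel
    have hsplit : ((Adag n m).comp A) x = Adag n m (A u) + Adag n m (A (x - u)) := by
      simp only [comp_apply]
      rw [← map_add, hsum]
    calc ‖((Adag n m).comp A) x‖ = ‖Adag n m (A u) + Adag n m (A (x - u))‖ := by rw [hsplit]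
      _ ≤ ‖Adag n m (A u)‖ + ‖Adag n m (A (x - u))‖ := norm_add_le _ _
      _ ≤ (‖x‖ + C' * ‖x‖) + C' * ‖x‖ := by linarith
      _ = (1 + 2 * C') * ‖x‖ := by ring
      _ ≤ max (1 + 2 * C') 0 * ‖x‖ :=
        mul_le_mul_of_nonneg_right (le_max_left _ _) (norm_nonneg x)
end
end
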